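/- Consider the saddle-point (KKT) matrix K with block structure: rows/columns indexed by (x, r^p, r^m, λ^p, λ^m), where K has blocks G^T and H^T in the x-row against the multiplier columns, ℓ^p_{rr} and ℓ^m_{rr} (positive definite) on the diagonal for r^p, r^m, and −Q^{1/2}, −R^{1/2} coupling residuals to multipliers, with G invertible. Then K is invertible if and only if the Schur complement S = H G^{-1} Q^{1/2} (ℓ^p_{rr})^{-1} Q^{T/2} G^{-T} H^T + R^{1/2} (ℓ^m_{rr})^{-1} R^{T/2} is invertible. -/

import Mathlib

/-!
Write a kernel vector of `K` as `(x, rᵖ, rᵐ, λᵖ, λᵐ)`. Since `G`, `ℓᵖ_rr` and `ℓᵐ_rr` are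
invertible, the first four block rows of `K v = 0` solve successively for `λᵖ`, `rᵖ`, `rᵐ` and `x`
in terms of `λᵐ`, and substituting into the last block row leaves exactly `S λᵐ = 0`. So the
kernels of `K` and `S` correspond via `v ↦ λᵐ`, and one is trivial iff the other is.
-/

open Matrix

namespace Matrix

variable {R 𝕜 n : Type*} [Fintype n] [DecidableEq n]

theorem mulVec_eq_iff_eq_nonsing_inv_mulVec [CommRing R] {A : Matrix n n R} (hA : IsUnit A.det)
    {u b : n → R} : A *ᵥ u = b ↔ u = A⁻¹ *ᵥ b := by
  constructor <;> rintro rfl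
  · rw [mulVec_mulVec, nonsing_inv_mul _ hA, one_mulVec]
  · rw [mulVec_mulVec, mul_nonsing_inv _ hA, one_mulVec]

theorem isUnit_iff_forall_mulVec_eq_zero [Field 𝕜] {M : Matrix n n 𝕜} :
    IsUnit M ↔ ∀ v, M *ᵥ v = 0 → v = 0 := by
  rw [← ker_mulVecLin_eq_bot_iff, LinearMap.ker_eq_bot, coe_mulVecLin, mulVec_injective_iff_isUnit]

end Matrix

section KKT

variable {R 𝕜 n m : Type*} [CommRing R] [Fintype n] [Fintype m]

/-- Vectors are ordered `(x, rᵖ, rᵐ, λᵖ, λᵐ)`; `Qh`, `Rh` stand for `Q^{1/2}`, `R^{1/2}` and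
`Ap`, `Am` for `ℓᵖ_rr`, `ℓᵐ_rr`. -/
def IsKKTMatrix (K : Matrix (n ⊕ n ⊕ m ⊕ n ⊕ m) (n ⊕ n ⊕ m ⊕ n ⊕ m) R)
    (G Qh Ap : Matrix n n R) (H : Matrix m n R) (Rh Am : Matrix m m R) : Prop :=
  ∀ (x rp lp : n → R) (rm lm : m → R),
    K *ᵥ Sum.elim x (Sum.elim rp (Sum.elim rm (Sum.elim lp lm))) =
      Sum.elim (Gᵀ *ᵥ lp + Hᵀ *ᵥ lm) (Sum.elim (Ap *ᵥ rp - Qhᵀ *ᵥ lp)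
        (Sum.elim (Am *ᵥ rm - Rhᵀ *ᵥ lm) (Sum.elim (G *ᵥ x - Qh *ᵥ rp) (H *ᵥ x - Rh *ᵥ rm))))

noncomputable def kktSchur [DecidableEq n] [DecidableEq m] (G Qh Ap : Matrix n n R)
    (H : Matrix m n R) (Rh Am : Matrix m m R) : Matrix m m R :=
  H * G⁻¹ * Qh * Ap⁻¹ * Qhᵀ * (G⁻¹)ᵀ * Hᵀ + Rh * Am⁻¹ * Rhᵀ

variable [DecidableEq n] [DecidableEq m]
  {K : Matrix (n ⊕ n ⊕ m ⊕ n ⊕ m) (n ⊕ n ⊕ m ⊕ n ⊕ m) R}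
  {G Qh Ap : Matrix n n R} {H : Matrix m n R} {Rh Am : Matrix m m R}

theorem kktSchur_mulVec (w : m → R) :
    kktSchur G Qh Ap H Rh Am *ᵥ w =
      H *ᵥ G⁻¹ *ᵥ Qh *ᵥ Ap⁻¹ *ᵥ Qhᵀ *ᵥ (G⁻¹)ᵀ *ᵥ Hᵀ *ᵥ w + Rh *ᵥ Am⁻¹ *ᵥ Rhᵀ *ᵥ w := by
  simp only [kktSchur, add_mulVec, mulVec_mulVec, Matrix.mul_assoc]

theorem IsKKTMatrix.mulVec_eq_zero_iff (hK : IsKKTMatrix K G Qh Ap H Rh Am)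
    (hG : IsUnit G.det) (hAp : IsUnit Ap.det) (hAm : IsUnit Am.det) {x rp lp : n → R} {rm lm : m → R} :
    K *ᵥ Sum.elim x (Sum.elim rp (Sum.elim rm (Sum.elim lp lm))) = 0 ↔
      lp = -((G⁻¹)ᵀ *ᵥ Hᵀ *ᵥ lm) ∧ rp = Ap⁻¹ *ᵥ Qhᵀ *ᵥ lp ∧ rm = Am⁻¹ *ᵥ Rhᵀ *ᵥ lm ∧
        x = G⁻¹ *ᵥ Qh *ᵥ rp ∧ kktSchur G Qh Ap H Rh Am *ᵥ lm = 0 := by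
  have hGt : IsUnit Gᵀ.det := by rwa [det_transpose]
  rw [hK]
  simp only [← Sum.elim_zero_zero, Sum.elim_eq_iff, add_eq_zero_iff_eq_neg,
    sub_eq_zero, mulVec_eq_iff_eq_nonsing_inv_mulVec hGt, mulVec_eq_iff_eq_nonsing_inv_mulVec hAp,
    mulVec_eq_iff_eq_nonsing_inv_mulVec hAm, mulVec_eq_iff_eq_nonsing_inv_mulVec hG,
    mulVec_neg, transpose_nonsing_inv]
  refine and_congr_right fun hlp => and_congr_right fun hrp => and_congr_right fun hrm =>
    and_congr_right fun hx => ?_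
  subst hlp hrp hrm hx
  simp only [kktSchur_mulVec, transpose_nonsing_inv, mulVec_neg]
  exact neg_eq_iff_add_eq_zero

theorem IsKKTMatrix.isUnit_iff [Field 𝕜]
    {K : Matrix (n ⊕ n ⊕ m ⊕ n ⊕ m) (n ⊕ n ⊕ m ⊕ n ⊕ m) 𝕜} {G Qh Ap : Matrix n n 𝕜}
    {H : Matrix m n 𝕜} {Rh Am : Matrix m m 𝕜} (hK : IsKKTMatrix K G Qh Ap H Rh Am)
    (hG : IsUnit G.det) (hAp : IsUnit Ap.det) (hAm : IsUnit Am.det) :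
    IsUnit K ↔ IsUnit (kktSchur G Qh Ap H Rh Am) := by
  simp only [isUnit_iff_forall_mulVec_eq_zero]
  constructor
  · intro hKker w hw
    have hv := hKker _ ((hK.mulVec_eq_zero_iff hG hAp hAm (lm := w)).2 ⟨rfl, rfl, rfl, rfl, hw⟩)
    exact funext fun a => congrFun hv (.inr (.inr (.inr (.inr a))))
  · intro hSker v hv
    obtain ⟨x, rp, rm, lp, lm, rfl⟩ :
        ∃ x rp rm lp lm, v = Sum.elim x (Sum.elim rp (Sum.elim rm (Sum.elim lp lm))) :=
      ⟨_, _, _, _, _, by ext (_ | _ | _ | _ | _) <;> rfl⟩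
    obtain ⟨rfl, rfl, rfl, rfl, hlm⟩ := (hK.mulVec_eq_zero_iff hG hAp hAm).1 hv
    simp [hSker lm hlm]

end KKT

/-- The KKT saddle-point matrix of the singular smoother Lagrangian
(variables ordered `x, rᵖ, rᵐ, λᵖ, λᵐ`) is invertible iff the Schur complement
`S = H G⁻¹ Q^{1/2} (ℓᵖ_rr)⁻¹ Q^{T/2} G⁻ᵀ Hᵀ + R^{1/2} (ℓᵐ_rr)⁻¹ R^{T/2}` is invertible. -/
theorem kkt_invertible_iff_schur
    {d p : ℕ}
    (G Qh Ap : Matrix (Fin d) (Fin d) ℝ)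
    (H : Matrix (Fin p) (Fin d) ℝ)
    (Rh Am : Matrix (Fin p) (Fin p) ℝ)
    (hAp : Ap.PosDef) (hAm : Am.PosDef)
    (hG : IsUnit G.det)
    (K : Matrix (Fin d ⊕ Fin d ⊕ Fin p ⊕ Fin d ⊕ Fin p)
               (Fin d ⊕ Fin d ⊕ Fin p ⊕ Fin d ⊕ Fin p) ℝ)
    (hK : K = Matrix.of fun i j =>
      match i, j with
      | Sum.inl a, Sum.inr (Sum.inr (Sum.inr (Sum.inl b))) => Gᵀ a b
      | Sum.inl a, Sum.inr (Sum.inr (Sum.inr (Sum.inr b))) => Hᵀ a b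
      | Sum.inr (Sum.inl a), Sum.inr (Sum.inl b) => Ap a b
      | Sum.inr (Sum.inl a), Sum.inr (Sum.inr (Sum.inr (Sum.inl b))) => -Qhᵀ a b
      | Sum.inr (Sum.inr (Sum.inl a)), Sum.inr (Sum.inr (Sum.inl b)) => Am a b
      | Sum.inr (Sum.inr (Sum.inl a)), Sum.inr (Sum.inr (Sum.inr (Sum.inr b))) => -Rhᵀ a b
      | Sum.inr (Sum.inr (Sum.inr (Sum.inl a))), Sum.inl b => G a b
      | Sum.inr (Sum.inr (Sum.inr (Sum.inl a))), Sum.inr (Sum.inl b) => -Qh a b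
      | Sum.inr (Sum.inr (Sum.inr (Sum.inr a))), Sum.inl b => H a b
      | Sum.inr (Sum.inr (Sum.inr (Sum.inr a))), Sum.inr (Sum.inr (Sum.inl b)) => -Rh a b
      | _, _ => 0) :
    IsUnit K ↔
      IsUnit (H * G⁻¹ * Qh * Ap⁻¹ * Qhᵀ * (G⁻¹)ᵀ * Hᵀ + Rh * Am⁻¹ * Rhᵀ) := by
  have hKKT : IsKKTMatrix K G Qh Ap H Rh Am := by
    intro x rp lp rm lm
    subst hK
    ext (a | a | a | a | a) <;>
      simp [mulVec, dotProduct, Fintype.sum_sum_type, sub_eq_add_neg]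
  exact hKKT.isUnit_iff hG ((isUnit_iff_isUnit_det _).1 hAp.isUnit)
    ((isUnit_iff_isUnit_det _).1 hAm.isUnit)
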